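/- Fix integers k, L ≥ 1 and N ≥ 1, and consider sums over tuples α₁,…,α_{kL} ∈ [N] and β₁,…,β_{kL} ∈ [N]. For a tuple, let d(a) be the number of indices t with α_t = a and d(b) the number of t with β_t = b. Then Σ_{α,β} Π_{t=1}^{kL} max(d(α_t), d(β_t)) ≤ K^{kL} N^{2kL} whenever N > (kL)^6, for a universal constant K. -/
import Mathlib

open Finset

/-- multiplicity of value `b` in tuple `α` -/
def dcount {m N : ℕ} (α : Fin m → Fin N) (b : Fin N) : ℕ :=
  (Finset.univ.filter fun t => α t = b).card

lemma dcount_cons {m N : ℕ} (a : Fin N) (g : Fin m → Fin N) (b : Fin N) :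
    dcount (Fin.cons a g) b = (if a = b then 1 else 0) + dcount g b := by
  unfold dcount
  rw [Finset.card_filter, Finset.card_filter, Fin.sum_univ_succ]
  simp

lemma sum_dcount {m N : ℕ} (g : Fin m → Fin N) : ∑ b, dcount g b = m := by
  unfold dcount
  rw [← Finset.card_eq_sum_card_fiberwise (fun x _ => Finset.mem_univ (g x))]
  simp

lemma one_le_dcount {m N : ℕ} (α : Fin m → Fin N) (t : Fin m) :
    1 ≤ dcount α (α t) := by
  apply Finset.card_pos.mpr
  exact ⟨t, by simp⟩

lemma prod_dcount_eq {m N : ℕ} (α : Fin m → Fin N) :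
    (∏ t, ((dcount α (α t) : ℝ))) = ∏ b, ((dcount α b : ℝ)) ^ (dcount α b) := by
  rw [← Finset.prod_fiberwise_of_maps_to (fun x _ => Finset.mem_univ (α x))
    (fun t => ((dcount α (α t) : ℝ)))]
  refine Finset.prod_congr rfl fun b _ => ?_
  rw [Finset.prod_congr rfl (fun t ht => ?_), Finset.prod_const]
  · rfl
  · have h := (Finset.mem_filter.mp ht).2
    rw [h]

/-- The key elementary estimate `(d+1)^(d+1) ≤ 3 (d+1) d^d`. -/
lemma key_pow (d : ℕ) : ((d : ℝ) + 1) ^ (d + 1) ≤ 3 * ((d : ℝ) + 1) * (d : ℝ) ^ d := by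
  rcases Nat.eq_zero_or_pos d with h | h
  · subst h; norm_num
  have hd : (0 : ℝ) < d := by exact_mod_cast h
  have h1 : (d : ℝ) + 1 ≤ (d : ℝ) * Real.exp (1 / d) := by
    have := Real.add_one_le_exp (1 / (d : ℝ))
    have e : (d : ℝ) * (1 / d + 1) = (d : ℝ) + 1 := by field_simp; ring
    rw [← e]
    exact mul_le_mul_of_nonneg_left this hd.le
  have h2 : ((d : ℝ) + 1) ^ d ≤ ((d : ℝ) * Real.exp (1 / d)) ^ d :=
    pow_le_pow_left₀ (by positivity) h1 d
  have h3 : ((d : ℝ) * Real.exp (1 / d)) ^ d = (d : ℝ) ^ d * Real.exp 1 := by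
    rw [mul_pow, ← Real.exp_nat_mul]
    congr 2
    field_simp
  have h4 : ((d : ℝ) + 1) ^ d ≤ 3 * (d : ℝ) ^ d := by
    calc ((d : ℝ) + 1) ^ d ≤ (d : ℝ) ^ d * Real.exp 1 := h2.trans_eq h3
    _ ≤ (d : ℝ) ^ d * 3 := by
        apply mul_le_mul_of_nonneg_left (Real.exp_one_lt_d9.le.trans (by norm_num))
        positivity
    _ = 3 * (d : ℝ) ^ d := mul_comm _ _
  calc ((d : ℝ) + 1) ^ (d + 1) = ((d : ℝ) + 1) ^ d * ((d : ℝ) + 1) := pow_succ _ _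
  _ ≤ (3 * (d : ℝ) ^ d) * ((d : ℝ) + 1) := by
      apply mul_le_mul_of_nonneg_right h4 (by positivity)
  _ = 3 * ((d : ℝ) + 1) * (d : ℝ) ^ d := by ring

noncomputable def F (N m : ℕ) : ℝ :=
  ∑ α : Fin m → Fin N, ∏ b, ((dcount α b : ℝ)) ^ (dcount α b)

lemma F_nonneg (N m : ℕ) : 0 ≤ F N m := by
  apply Finset.sum_nonneg
  intro α _
  positivity

lemma F_succ (N m : ℕ) : F N (m + 1) ≤ 3 * ((N : ℝ) + m) * F N m := by
  have hrw : F N (m + 1) =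
      ∑ a : Fin N, ∑ g : Fin m → Fin N,
        ∏ b, ((dcount (Fin.cons a g) b : ℝ)) ^ (dcount (Fin.cons a g) b) := by
    unfold F
    rw [← Fintype.sum_equiv (Fin.consEquiv (fun _ => Fin N))
      (fun p => ∏ b, ((dcount (Fin.cons p.1 p.2) b : ℝ)) ^ (dcount (Fin.cons p.1 p.2) b))
      (fun α => ∏ b, ((dcount α b : ℝ)) ^ (dcount α b)) (fun p => rfl),
      Fintype.sum_prod_type]
  rw [hrw, Finset.sum_comm]
  have hbd : ∀ (g : Fin m → Fin N) (a : Fin N),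
      (∏ b, ((dcount (Fin.cons a g) b : ℝ)) ^ (dcount (Fin.cons a g) b)) ≤
        3 * ((dcount g a : ℝ) + 1) * ∏ b, ((dcount g b : ℝ)) ^ (dcount g b) := by
    intro g a
    rw [← Finset.mul_prod_erase Finset.univ _ (Finset.mem_univ a),
        ← Finset.mul_prod_erase Finset.univ (fun b => ((dcount g b : ℝ)) ^ (dcount g b))
          (Finset.mem_univ a)]
    have herase : ∀ b ∈ Finset.univ.erase a,
        ((dcount (Fin.cons a g) b : ℝ)) ^ (dcount (Fin.cons a g) b) =
          ((dcount g b : ℝ)) ^ (dcount g b) := by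
      intro b hb
      have hne : a ≠ b := (Finset.mem_erase.mp hb).1.symm
      rw [dcount_cons, if_neg hne]
      norm_num
    rw [Finset.prod_congr rfl herase]
    have hX : ((dcount (Fin.cons a g) a : ℝ)) ^ (dcount (Fin.cons a g) a) ≤
        3 * ((dcount g a : ℝ) + 1) * ((dcount g a : ℝ)) ^ (dcount g a) := by
      rw [dcount_cons, if_pos rfl]
      push_cast
      calc (1 + (dcount g a : ℝ)) ^ (1 + dcount g a)
          = ((dcount g a : ℝ) + 1) ^ (dcount g a + 1) := by
            rw [Nat.add_comm, add_comm]
      _ ≤ 3 * ((dcount g a : ℝ) + 1) * (dcount g a : ℝ) ^ (dcount g a) := key_pow _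
    have hP : (0:ℝ) ≤ ∏ x ∈ Finset.univ.erase a, ((dcount g x : ℝ)) ^ (dcount g x) := by
      positivity
    calc ((dcount (Fin.cons a g) a : ℝ)) ^ (dcount (Fin.cons a g) a) *
          ∏ x ∈ Finset.univ.erase a, ((dcount g x : ℝ)) ^ (dcount g x)
        ≤ (3 * ((dcount g a : ℝ) + 1) * ((dcount g a : ℝ)) ^ (dcount g a)) *
          ∏ x ∈ Finset.univ.erase a, ((dcount g x : ℝ)) ^ (dcount g x) :=
          mul_le_mul_of_nonneg_right hX hP
    _ = 3 * ((dcount g a : ℝ) + 1) * (((dcount g a : ℝ)) ^ (dcount g a) *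
          ∏ x ∈ Finset.univ.erase a, ((dcount g x : ℝ)) ^ (dcount g x)) := by ring
  calc (∑ g : Fin m → Fin N, ∑ a : Fin N,
        ∏ b, ((dcount (Fin.cons a g) b : ℝ)) ^ (dcount (Fin.cons a g) b))
      ≤ ∑ g : Fin m → Fin N, ∑ a : Fin N,
        3 * ((dcount g a : ℝ) + 1) * ∏ b, ((dcount g b : ℝ)) ^ (dcount g b) := by
        apply Finset.sum_le_sum; intro g _
        apply Finset.sum_le_sum; intro a _
        exact hbd g a
  _ = ∑ g : Fin m → Fin N,
        (3 * ((m : ℝ) + N)) * ∏ b, ((dcount g b : ℝ)) ^ (dcount g b) := by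
      refine Finset.sum_congr rfl fun g _ => ?_
      rw [← Finset.sum_mul]
      congr 1
      rw [← Finset.mul_sum]
      congr 1
      have : ∑ a : Fin N, ((dcount g a : ℝ) + 1) = (∑ a, (dcount g a : ℝ)) + N := by
        rw [Finset.sum_add_distrib]
        simp
      rw [this]
      have : (∑ a, (dcount g a : ℝ)) = (m : ℝ) := by
        rw [← Nat.cast_sum]
        exact_mod_cast congrArg (Nat.cast (R := ℝ)) (sum_dcount g)
      rw [this]
  _ = 3 * ((N : ℝ) + m) * F N m := by
      rw [← Finset.mul_sum]
      congr 1
      ring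

lemma F_le (N m : ℕ) : F N m ≤ (3 * ((N : ℝ) + m)) ^ m := by
  induction m with
  | zero =>
    simp [F, dcount]
  | succ m ih =>
    have h1 : (0:ℝ) ≤ 3 * ((N : ℝ) + m) := by positivity
    have hAB : 3 * ((N : ℝ) + m) ≤ 3 * ((N : ℝ) + ((m + 1 : ℕ) : ℝ)) := by
      push_cast; linarith
    calc F N (m + 1) ≤ 3 * ((N : ℝ) + m) * F N m := F_succ N m
    _ ≤ 3 * ((N : ℝ) + m) * (3 * ((N : ℝ) + m)) ^ m :=
        mul_le_mul_of_nonneg_left ih h1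
    _ = (3 * ((N : ℝ) + m)) ^ (m + 1) := (pow_succ' _ _).symm
    _ ≤ (3 * ((N : ℝ) + ((m + 1 : ℕ) : ℝ))) ^ (m + 1) :=
        pow_le_pow_left₀ h1 hAB _

theorem stmt_3 :
    ∃ K : ℝ, 0 ≤ K ∧
      ∀ (k L N : ℕ), 1 ≤ k → 1 ≤ L → (k * L) ^ 6 < N →
      (∑ α : Fin (k * L) → Fin N, ∑ β : Fin (k * L) → Fin N,
          ∏ t : Fin (k * L),
            ((max ((Finset.univ.filter fun t' => α t' = α t).card)
                  ((Finset.univ.filter fun t' => β t' = β t).card) : ℕ) : ℝ))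
        ≤ K ^ (k * L) * (N : ℝ) ^ (2 * k * L) := by
  refine ⟨36, by norm_num, ?_⟩
  intro k L N hk hL hN
  set m := k * L with hm
  have hm1 : 1 ≤ m := by
    have := Nat.mul_le_mul hk hL
    simpa using this
  have hmN : m ≤ N := le_trans (Nat.le_self_pow (by norm_num) m) hN.le
  have h2m : 2 * k * L = 2 * m := by rw [hm, mul_assoc]
  rw [h2m]
  have hU : (∑ α : Fin m → Fin N, ∏ t, ((dcount α (α t) : ℝ))) = F N m :=
    Finset.sum_congr rfl (fun α _ => prod_dcount_eq α)
  have h1 : (∑ α : Fin m → Fin N, ∑ β : Fin m → Fin N,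
        ∏ t : Fin m,
          ((max ((Finset.univ.filter fun t' => α t' = α t).card)
                ((Finset.univ.filter fun t' => β t' = β t).card) : ℕ) : ℝ))
      ≤ (∑ α : Fin m → Fin N, ∏ t, ((dcount α (α t) : ℝ))) *
        (∑ β : Fin m → Fin N, ∏ t, ((dcount β (β t) : ℝ))) := by
    rw [Finset.sum_mul_sum]
    apply Finset.sum_le_sum; intro α _
    apply Finset.sum_le_sum; intro β _
    rw [← Finset.prod_mul_distrib]
    apply Finset.prod_le_prod
    · intro t _; positivity
    · intro t _
      have ha : 1 ≤ dcount α (α t) := one_le_dcount α t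
      have hb : 1 ≤ dcount β (β t) := one_le_dcount β t
      have hmax : max (dcount α (α t)) (dcount β (β t)) ≤
          dcount α (α t) * dcount β (β t) :=
        max_le (Nat.le_mul_of_pos_right _ hb) (Nat.le_mul_of_pos_left _ ha)
      exact_mod_cast hmax
  have hF : F N m ≤ (6 * (N : ℝ)) ^ m := by
    refine (F_le N m).trans (pow_le_pow_left₀ (by positivity) ?_ m)
    have hc : (m : ℝ) ≤ (N : ℝ) := by exact_mod_cast hmN
    linarith
  calc (∑ α : Fin m → Fin N, ∑ β : Fin m → Fin N,
        ∏ t : Fin m,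
          ((max ((Finset.univ.filter fun t' => α t' = α t).card)
                ((Finset.univ.filter fun t' => β t' = β t).card) : ℕ) : ℝ))
      ≤ (∑ α : Fin m → Fin N, ∏ t, ((dcount α (α t) : ℝ))) *
        (∑ β : Fin m → Fin N, ∏ t, ((dcount β (β t) : ℝ))) := h1
  _ = F N m * F N m := by rw [hU]
  _ ≤ (6 * (N : ℝ)) ^ m * (6 * (N : ℝ)) ^ m :=
      mul_le_mul hF hF (F_nonneg N m) (by positivity)
  _ = (36 : ℝ) ^ m * (N : ℝ) ^ (2 * m) := by
      rw [mul_pow, show (36:ℝ) = 6 * 6 by norm_num, mul_pow, two_mul, pow_add]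
      ring
  _ ≤ (36 : ℝ) ^ m * (N : ℝ) ^ (2 * m) := le_refl _
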